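/- arXiv:1507.01400 — 6 statements merged into one kernel-verified Lean document; each statement's English description precedes it below -/
import Mathlib

section
/- Let d ≥ 1, p ≥ 2, v ∈ ℝ^d a unit vector and t > 0. Then for every z, w ∈ ℝ^d one has ‖F_{v,t}(z) − F_{v,t}(w)‖ ≤ (p−1) · (‖H_{v,t}(z)‖^{(p−2)/p} + ‖H_{v,t}(w)‖^{(p−2)/p}) · ‖H_{v,t}(z) − H_{v,t}(w)‖. -/
/-- `F_{v,t}(z) = (z·v − t)₊^{p−1} v`, where `s₊ = max(s,0)`. -/
noncomputable def Fvt {d : ℕ} (p : ℝ) (v : EuclideanSpace ℝ (Fin d)) (t : ℝ)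
    (z : EuclideanSpace ℝ (Fin d)) : EuclideanSpace ℝ (Fin d) :=
  (max ((inner ℝ z v : ℝ) - t) 0) ^ (p - 1) • v

/-- `H_{v,t}(z) = (z·v − t)₊^{p/2} v`, where `s₊ = max(s,0)`. -/
noncomputable def Hvt {d : ℕ} (p : ℝ) (v : EuclideanSpace ℝ (Fin d)) (t : ℝ)
    (z : EuclideanSpace ℝ (Fin d)) : EuclideanSpace ℝ (Fin d) :=
  (max ((inner ℝ z v : ℝ) - t) 0) ^ (p / 2) • v

/-!
Both maps point along `v`, and with `A = ‖H(z)‖`, `α = 2(p-1)/p` one has `F(z) = A^α v`, while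
`(p-2)/p = α - 1`. So the claim is the scalar inequality
`|A^α - B^α| ≤ α (A^(α-1) + B^(α-1)) |A - B|` for `A, B ≥ 0`, which is the tangent-line bound
for the convex function `x ↦ x^α`, together with `α ≤ p - 1`.
-/

namespace Real

lemma rpow_sub_rpow_le_mul_rpow_mul_sub {α A B : ℝ} (hα : 1 ≤ α) (hB : 0 ≤ B) (hBA : B ≤ A) :
    A ^ α - B ^ α ≤ α * A ^ (α - 1) * (A - B) := by
  rcases hBA.eq_or_lt with rfl | hlt
  · simp
  have hslope : slope (fun x : ℝ ↦ x ^ α) B A ≤ α * A ^ (α - 1) :=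
    (convexOn_rpow hα).slope_le_of_hasDerivAt hB (hB.trans hlt.le) hlt
      (hasDerivAt_rpow_const (Or.inr hα))
  rw [slope_def_field, div_le_iff₀ (sub_pos.mpr hlt)] at hslope
  exact hslope

lemma abs_rpow_sub_rpow_le {α A B : ℝ} (hα : 1 ≤ α) (hA : 0 ≤ A) (hB : 0 ≤ B) :
    |A ^ α - B ^ α| ≤ α * (A ^ (α - 1) + B ^ (α - 1)) * |A - B| := by
  wlog hBA : B ≤ A generalizing A B
  · rw [abs_sub_comm, abs_sub_comm A, add_comm]
    exact this hB hA (le_of_not_ge hBA)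
  have hpow : B ^ α ≤ A ^ α := rpow_le_rpow hB hBA (by linarith)
  rw [abs_of_nonneg (sub_nonneg.mpr hpow), abs_of_nonneg (sub_nonneg.mpr hBA)]
  calc A ^ α - B ^ α ≤ α * A ^ (α - 1) * (A - B) := rpow_sub_rpow_le_mul_rpow_mul_sub hα hB hBA
    _ ≤ α * (A ^ (α - 1) + B ^ (α - 1)) * (A - B) := by
      have : 0 ≤ B ^ (α - 1) := rpow_nonneg hB _
      gcongr
      linarith

end Real

section

variable {d : ℕ} {p : ℝ} {v : EuclideanSpace ℝ (Fin d)} {t : ℝ}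

lemma Hvt_eq_norm_smul (hv : ‖v‖ = 1) (z : EuclideanSpace ℝ (Fin d)) :
    Hvt p v t z = ‖Hvt p v t z‖ • v := by
  have hs : 0 ≤ max ((inner ℝ z v : ℝ) - t) 0 := le_max_right _ _
  rw [Hvt, norm_smul, hv, mul_one, Real.norm_of_nonneg (Real.rpow_nonneg hs _)]

lemma Fvt_eq_norm_Hvt_rpow_smul (hp : 0 < p) (hv : ‖v‖ = 1) (z : EuclideanSpace ℝ (Fin d)) :
    Fvt p v t z = ‖Hvt p v t z‖ ^ (2 * (p - 1) / p) • v := by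
  have hs : 0 ≤ max ((inner ℝ z v : ℝ) - t) 0 := le_max_right _ _
  rw [Fvt, Hvt, norm_smul, hv, mul_one, Real.norm_of_nonneg (Real.rpow_nonneg hs _),
    ← Real.rpow_mul hs]
  congr 2
  field_simp

lemma Hvt_sub_Hvt (hv : ‖v‖ = 1) (z w : EuclideanSpace ℝ (Fin d)) :
    Hvt p v t z - Hvt p v t w = (‖Hvt p v t z‖ - ‖Hvt p v t w‖) • v := by
  rw [sub_smul, ← Hvt_eq_norm_smul hv, ← Hvt_eq_norm_smul hv]

end

theorem stmt_2_general {d : ℕ} (p : ℝ) (hp : 2 ≤ p)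
    (v : EuclideanSpace ℝ (Fin d)) (hv : ‖v‖ = 1) (t : ℝ)
    (z w : EuclideanSpace ℝ (Fin d)) :
    ‖Fvt p v t z - Fvt p v t w‖ ≤
      (p - 1) * (‖Hvt p v t z‖ ^ ((p - 2) / p) + ‖Hvt p v t w‖ ^ ((p - 2) / p)) *
        ‖Hvt p v t z - Hvt p v t w‖ := by
  have hp0 : 0 < p := by linarith
  have hexp : (p - 2) / p = 2 * (p - 1) / p - 1 := by field_simp; ring
  rw [Fvt_eq_norm_Hvt_rpow_smul hp0 hv, Fvt_eq_norm_Hvt_rpow_smul hp0 hv, ← sub_smul,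
    Hvt_sub_Hvt hv, norm_smul, norm_smul, hv, mul_one, mul_one, Real.norm_eq_abs,
    Real.norm_eq_abs, hexp]
  set α := 2 * (p - 1) / p
  have hα : 1 ≤ α := by rw [le_div_iff₀ hp0]; linarith
  have hαp : α ≤ p - 1 := by rw [div_le_iff₀ hp0]; nlinarith
  set A := ‖Hvt p v t z‖
  set B := ‖Hvt p v t w‖
  calc |A ^ α - B ^ α| ≤ α * (A ^ (α - 1) + B ^ (α - 1)) * |A - B| :=
        Real.abs_rpow_sub_rpow_le hα (norm_nonneg _) (norm_nonneg _)
    _ ≤ (p - 1) * (A ^ (α - 1) + B ^ (α - 1)) * |A - B| := by gcongr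

/-- for `p ≥ 2`, `v` a unit vector and `t > 0`, for all `z, w ∈ ℝ^d`,
`‖F(z) − F(w)‖ ≤ (p−1)(‖H(z)‖^{(p−2)/p} + ‖H(w)‖^{(p−2)/p})‖H(z) − H(w)‖`. -/
theorem stmt_2 {d : ℕ} (hd : 1 ≤ d) (p : ℝ) (hp : 2 ≤ p)
    (v : EuclideanSpace ℝ (Fin d)) (hv : ‖v‖ = 1) (t : ℝ) (ht : 0 < t)
    (z w : EuclideanSpace ℝ (Fin d)) :
    ‖Fvt p v t z - Fvt p v t w‖ ≤
      (p - 1) * (‖Hvt p v t z‖ ^ ((p - 2) / p) + ‖Hvt p v t w‖ ^ ((p - 2) / p)) *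
        ‖Hvt p v t z - Hvt p v t w‖ :=
  stmt_2_general p hp v hv t z w
end

section
/- Let d ≥ 1, p ≥ 2, v ∈ ℝ^d a unit vector and t > 0. Then for every z, w ∈ ℝ^d one has (F_{v,t}(z) − F_{v,t}(w)) · (z − w) ≥ (4/p²) · ‖H_{v,t}(z) − H_{v,t}(w)‖². -/
/-!
Everything reduces to the scalar inequality
`(4/p²)(a^{p/2} − b^{p/2})² ≤ (a^{p−1} − b^{p−1})(a − b)` for `0 ≤ b ≤ a`: by convexity of
`s ↦ s^{p/2}` the left difference is at most `(p/2) a^{p/2−1} (a − b)`, and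
`a^{p−2}(a − b) ≤ a^{p−1} − b^{p−1}`. The truncation `s ↦ (s − t)₊` is monotone and
1-Lipschitz, so it only shrinks `a − b` relative to `z·v − w·v`, and since `F` and `H` point
along the unit vector `v`, the vector inequality is the scalar one at `a = (z·v − t)₊`,
`b = (w·v − t)₊`.
-/

namespace Real

lemma rpow_sub_rpow_le_mul_rpow_sub_one_mul {q a b : ℝ} (hq : 1 ≤ q) (ha : 0 < a) (hb : 0 ≤ b) :
    a ^ q - b ^ q ≤ q * a ^ (q - 1) * (a - b) := by
  have hBernoulli : 1 + q * (b / a - 1) ≤ (b / a) ^ q := by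
    have := one_add_mul_self_le_rpow_one_add (s := b / a - 1) (by linarith [div_nonneg hb ha.le]) hq
    rwa [add_sub_cancel] at this
  rw [div_rpow hb ha.le, le_div_iff₀ (rpow_pos_of_pos ha q)] at hBernoulli
  have htangent : (1 + q * (b / a - 1)) * a ^ q = a ^ q - q * a ^ (q - 1) * (a - b) := by
    rw [rpow_sub_one ha.ne']
    field_simp
    ring
  linarith

lemma rpow_sub_one_mul_sub_le_rpow_sub_rpow {r a b : ℝ} (hr : 1 ≤ r) (hb : 0 ≤ b) (hba : b ≤ a) :
    a ^ (r - 1) * (a - b) ≤ a ^ r - b ^ r := by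
  have hsplit : ∀ s : ℝ, 0 ≤ s → s ^ r = s ^ (r - 1) * s := fun s hs => by
    rw [← rpow_add_one' hs (by linarith), sub_add_cancel]
  have hmono : b ^ (r - 1) * b ≤ a ^ (r - 1) * b :=
    mul_le_mul_of_nonneg_right (rpow_le_rpow hb hba (by linarith)) hb
  rw [hsplit a (hb.trans hba), hsplit b hb]
  linarith

lemma four_div_sq_mul_sq_rpow_sub_le {p a b : ℝ} (hp : 2 ≤ p) (hb : 0 ≤ b) (hba : b ≤ a) :
    4 / p ^ 2 * (a ^ (p / 2) - b ^ (p / 2)) ^ 2 ≤ (a ^ (p - 1) - b ^ (p - 1)) * (a - b) := by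
  rcases (hb.trans hba).eq_or_lt with rfl | ha
  · obtain rfl : b = 0 := le_antisymm hba hb
    simp
  have hhalf : 0 ≤ a ^ (p / 2) - b ^ (p / 2) :=
    sub_nonneg.2 (rpow_le_rpow hb hba (by linarith))
  have htangent := rpow_sub_rpow_le_mul_rpow_sub_one_mul (q := p / 2) (by linarith) ha hb
  have hsq : (a ^ (p / 2 - 1)) ^ 2 = a ^ (p - 2) := by
    rw [← rpow_natCast, ← rpow_mul ha.le]
    ring_nf
  have hlower := rpow_sub_one_mul_sub_le_rpow_sub_rpow (r := p - 1) (by linarith) hb hba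
  rw [show p - 1 - 1 = p - 2 by ring] at hlower
  have hp0 : 0 < p := by linarith
  calc 4 / p ^ 2 * (a ^ (p / 2) - b ^ (p / 2)) ^ 2
      ≤ 4 / p ^ 2 * (p / 2 * a ^ (p / 2 - 1) * (a - b)) ^ 2 := by gcongr
    _ = a ^ (p - 2) * (a - b) * (a - b) := by rw [mul_pow, mul_pow, hsq]; field_simp; ring
    _ ≤ (a ^ (p - 1) - b ^ (p - 1)) * (a - b) := by gcongr

lemma four_div_sq_mul_sq_rpow_max_sub_le {p : ℝ} (hp : 2 ≤ p) (x y : ℝ) :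
    4 / p ^ 2 * (max x 0 ^ (p / 2) - max y 0 ^ (p / 2)) ^ 2 ≤
      (max x 0 ^ (p - 1) - max y 0 ^ (p - 1)) * (x - y) := by
  wlog hyx : y ≤ x generalizing x y
  · have := this y x (le_of_not_ge hyx)
    linarith [sub_sq_comm (max x 0 ^ (p / 2)) (max y 0 ^ (p / 2))]
  have hmax : max y 0 ≤ max x 0 := max_le_max_right 0 hyx
  have hlip : max x 0 - max y 0 ≤ x - y := by
    simpa [abs_of_nonneg (sub_nonneg.2 hmax), abs_of_nonneg (sub_nonneg.2 hyx)]
      using abs_max_sub_max_le_abs x y 0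
  calc 4 / p ^ 2 * (max x 0 ^ (p / 2) - max y 0 ^ (p / 2)) ^ 2
      ≤ (max x 0 ^ (p - 1) - max y 0 ^ (p - 1)) * (max x 0 - max y 0) :=
        four_div_sq_mul_sq_rpow_sub_le hp (le_max_right y 0) hmax
    _ ≤ (max x 0 ^ (p - 1) - max y 0 ^ (p - 1)) * (x - y) := by
        gcongr
        exact sub_nonneg.2 (rpow_le_rpow (le_max_right y 0) hmax (by linarith))

end Real

theorem stmt_3_general {d : ℕ} (p : ℝ) (hp : 2 ≤ p)
    (v : EuclideanSpace ℝ (Fin d)) (hv : ‖v‖ = 1) (t : ℝ)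
    (z w : EuclideanSpace ℝ (Fin d)) :
    (inner ℝ (Fvt p v t z - Fvt p v t w) (z - w) : ℝ) ≥
      (4 / p ^ 2) * ‖Hvt p v t z - Hvt p v t w‖ ^ 2 := by
  set x : ℝ := inner ℝ z v - t
  set y : ℝ := inner ℝ w v - t
  have hinner : (inner ℝ (Fvt p v t z - Fvt p v t w) (z - w) : ℝ) =
      (max x 0 ^ (p - 1) - max y 0 ^ (p - 1)) * (x - y) := by
    rw [Fvt, Fvt, ← sub_smul, real_inner_smul_left, inner_sub_right, real_inner_comm z v,
      real_inner_comm w v]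
    ring
  have hnorm : ‖Hvt p v t z - Hvt p v t w‖ ^ 2 = (max x 0 ^ (p / 2) - max y 0 ^ (p / 2)) ^ 2 := by
    rw [Hvt, Hvt, ← sub_smul, norm_smul, hv, mul_one, Real.norm_eq_abs, sq_abs]
  rw [hinner, hnorm]
  exact Real.four_div_sq_mul_sq_rpow_max_sub_le hp x y

/-- for `p ≥ 2`, `v` a unit vector and `t > 0`, for all `z, w ∈ ℝ^d`,
`(F(z) − F(w)) · (z − w) ≥ (4/p²) ‖H(z) − H(w)‖²`. -/
theorem stmt_3 {d : ℕ} (hd : 1 ≤ d) (p : ℝ) (hp : 2 ≤ p)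
    (v : EuclideanSpace ℝ (Fin d)) (hv : ‖v‖ = 1) (t : ℝ) (ht : 0 < t)
    (z w : EuclideanSpace ℝ (Fin d)) :
    (inner ℝ (Fvt p v t z - Fvt p v t w) (z - w) : ℝ) ≥
      (4 / p ^ 2) * ‖Hvt p v t z - Hvt p v t w‖ ^ 2 :=
  stmt_3_general p hp v hv t z w
end

section
/- Let F : ℝⁿ → ℝ ∪ {+∞} and G* : ℝᵐ → ℝ ∪ {+∞} be convex, lower semicontinuous and proper, let Λ be a real m × n matrix with full column rank (i.e. Λ is injective), and let r > 0. Suppose there exists a pair (u, σ) ∈ ℝⁿ × ℝᵐ satisfying the primal-dual extremality relations: −Λᵀσ ∈ ∂F(u) and σ ∈ ∂G*(Λu). Let (u⁰, q⁰, σ⁰) ∈ ℝⁿ × ℝᵐ × ℝᵐ and let (u^k, q^k, σ^k) be any sequence such that for every k: u^{k+1} is a minimizer over ℝⁿ of u ↦ F(u) + σ^k · Λu + (r/2)‖Λu − q^k‖²; q^{k+1} is a minimizer over ℝᵐ of q ↦ G*(q) − σ^k · q + (r/2)‖Λu^{k+1} − q‖²; and σ^{k+1} = σ^k + r(Λu^{k+1}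 − q^{k+1}). Then there exists a pair (ū, σ̄) ∈ ℝⁿ × ℝᵐ satisfying the extremality relations −Λᵀσ̄ ∈ ∂F(ū) and σ̄ ∈ ∂G*(Λū) such that u^k → ū, q^k → Λū and σ^k → σ̄ as k → +∞. -/
open Filter

/-- Euclidean dot product on `Fin k → ℝ`. -/
def dotR {k : ℕ} (x y : Fin k → ℝ) : ℝ := ∑ i, x i * y i

/-- `Φ` is convex as an extended-real-valued function. -/
def ERealConvex {k : ℕ} (Φ : (Fin k → ℝ) → EReal) : Prop :=
  ∀ x y : Fin k → ℝ, ∀ a b : ℝ, 0 ≤ a → 0 ≤ b → a + b = 1 →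
    Φ (a • x + b • y) ≤ (a : EReal) * Φ x + (b : EReal) * Φ y

/-- `Φ` is proper: it never takes the value `−∞` and is finite somewhere. -/
def ERealProper {k : ℕ} (Φ : (Fin k → ℝ) → EReal) : Prop :=
  (∀ x, Φ x ≠ ⊥) ∧ ∃ x, Φ x ≠ ⊤

/-- `ξ ∈ ∂Φ(x)`: `Φ(x)` is finite and `Φ(y) ≥ Φ(x) + ξ·(y − x)` for all `y`. -/
def InSubdiff {k : ℕ} (Φ : (Fin k → ℝ) → EReal) (x ξ : Fin k → ℝ) : Prop :=
  Φ x ≠ ⊤ ∧ Φ x ≠ ⊥ ∧ ∀ y, Φ x + ((dotR ξ (y - x) : ℝ) : EReal) ≤ Φ y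

/-!
The two minimisation steps of ALG2 say that `-Λᵀ(σᵏ + r(Λuᵏ⁺¹ - qᵏ)) ∈ ∂F(uᵏ⁺¹)` and
`σᵏ⁺¹ ∈ ∂G*(qᵏ⁺¹)`. Monotonicity of both subdifferentials against an extremal pair `(v, τ)` shows
that the energy `‖σᵏ - τ‖² + r²‖qᵏ - Λv‖²` drops by at least `r²‖Λuᵏ⁺¹ - qᵏ‖²` at each step.
Hence the iterates are bounded and `Λuᵏ⁺¹ - qᵏ → 0`; monotonicity of `∂G*` between consecutive
steps then gives `Λuᵏ - qᵏ → 0` and `qᵏ⁺¹ - qᵏ → 0`. The limit of a convergent subsequence of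
`(qᵏ, σᵏ)` is an extremal pair, because the graphs of `∂F` and `∂G*` are closed and `Λ` is a closed
embedding. The energy relative to this new pair is nonincreasing and tends to `0` along the
subsequence, so it tends to `0`, which is the convergence of the whole sequence.
-/

open Topology Matrix

section dotR

variable {k : ℕ}

lemma dotR_eq_dotProduct (x y : Fin k → ℝ) : dotR x y = x ⬝ᵥ y := rfl

lemma dotR_self_nonneg (x : Fin k → ℝ) : 0 ≤ dotR x x :=
  Finset.sum_nonneg fun _ _ => mul_self_nonneg _

lemma dotR_neg_left (x y : Fin k → ℝ) : dotR (-x) y = -dotR x y := neg_dotProduct x y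

lemma dotR_self_sub_comm (x y : Fin k → ℝ) : dotR (x - y) (x - y) = dotR (y - x) (y - x) := by
  rw [← neg_sub, dotR_eq_dotProduct, neg_dotProduct, dotProduct_neg, neg_neg]; rfl

lemma dotR_add_self (a b : Fin k → ℝ) :
    dotR (a + b) (a + b) = dotR a a + 2 * dotR a b + dotR b b := by
  simp only [dotR_eq_dotProduct, add_dotProduct, dotProduct_add, dotProduct_comm b a]
  ring

lemma dotR_self_add_le_of_nonneg {a b : Fin k → ℝ} (h : 0 ≤ dotR a b) :
    dotR a a + dotR b b ≤ dotR (a + b) (a + b) := by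
  rw [dotR_add_self]; linarith

lemma norm_le_sqrt_dotR_self (x : Fin k → ℝ) : ‖x‖ ≤ √(dotR x x) := by
  refine (pi_norm_le_iff_of_nonneg (Real.sqrt_nonneg _)).2 fun i => ?_
  rw [Real.norm_eq_abs, ← Real.sqrt_mul_self_eq_abs]
  exact Real.sqrt_le_sqrt <|
    Finset.single_le_sum (f := fun j => x j * x j) (fun _ _ => mul_self_nonneg _)
      (Finset.mem_univ i)

lemma Matrix.dotR_transpose_mulVec {n m : ℕ} (Λ : Matrix (Fin m) (Fin n) ℝ)
    (v : Fin m → ℝ) (z : Fin n → ℝ) : dotR (Λᵀ *ᵥ v) z = dotR v (Λ *ᵥ z) := by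
  rw [dotR_eq_dotProduct, mulVec_transpose, ← dotProduct_mulVec]; rfl

lemma Filter.Tendsto.dotR {ι : Type*} {l : Filter ι} {x y : ι → Fin k → ℝ} {a b : Fin k → ℝ}
    (hx : Tendsto x l (𝓝 a)) (hy : Tendsto y l (𝓝 b)) :
    Tendsto (fun j => dotR (x j) (y j)) l (𝓝 (dotR a b)) :=
  tendsto_finsetSum _ fun i _ => (tendsto_pi_nhds.1 hx i).mul (tendsto_pi_nhds.1 hy i)

lemma tendsto_zero_of_dotR_self {ι : Type*} {l : Filter ι} {v : ι → Fin k → ℝ}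
    (h : Tendsto (fun j => dotR (v j) (v j)) l (𝓝 0)) : Tendsto v l (𝓝 0) := by
  refine squeeze_zero_norm (fun j => norm_le_sqrt_dotR_self (v j)) ?_
  simpa using h.sqrt

end dotR

section Subdifferential

variable {p : ℕ} {Φ : (Fin p → ℝ) → EReal}

lemma InSubdiff.coe_toReal {x ξ : Fin p → ℝ} (h : InSubdiff Φ x ξ) :
    ((Φ x).toReal : EReal) = Φ x :=
  EReal.coe_toReal h.1 h.2.1

lemma InSubdiff.dotR_sub_nonneg {x₁ ξ₁ x₂ ξ₂ : Fin p → ℝ} (h₁ : InSubdiff Φ x₁ ξ₁)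
    (h₂ : InSubdiff Φ x₂ ξ₂) : 0 ≤ dotR (ξ₁ - ξ₂) (x₁ - x₂) := by
  have e₁ := h₁.2.2 x₂
  have e₂ := h₂.2.2 x₁
  rw [← h₁.coe_toReal, ← h₂.coe_toReal, ← EReal.coe_add, EReal.coe_le_coe_iff] at e₁ e₂
  simp only [dotR_eq_dotProduct, sub_dotProduct, dotProduct_sub] at *
  linarith

lemma inSubdiff_of_tendsto {ι : Type*} {l : Filter ι} [l.NeBot] (hlsc : LowerSemicontinuous Φ)
    (hΦ : ERealProper Φ) {x ξ : ι → Fin p → ℝ} {x₀ ξ₀ : Fin p → ℝ} (hx : Tendsto x l (𝓝 x₀))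
    (hξ : Tendsto ξ l (𝓝 ξ₀)) (h : ∀ j, InSubdiff Φ (x j) (ξ j)) : InSubdiff Φ x₀ ξ₀ := by
  have key : ∀ y, Φ x₀ + ((dotR ξ₀ (y - x₀) : ℝ) : EReal) ≤ Φ y := by
    intro y
    set d : ι → EReal := fun j => ((dotR (ξ j) (y - x j) : ℝ) : EReal)
    have hd : Tendsto d l (𝓝 (dotR ξ₀ (y - x₀))) :=
      (continuous_coe_real_ereal.tendsto _).comp (hξ.dotR (tendsto_const_nhds.sub hx))
    have hΦx : Φ x₀ ≤ liminf (fun j => Φ (x j)) l :=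
      (hlsc.lowerSemicontinuousAt x₀).le_liminf.trans (liminf_le_liminf_of_le hx)
    calc Φ x₀ + ((dotR ξ₀ (y - x₀) : ℝ) : EReal)
        ≤ liminf (fun j => Φ (x j)) l + liminf d l := add_le_add hΦx hd.liminf_eq.ge
      _ ≤ liminf (fun j => Φ (x j) + d j) l := EReal.le_liminf_add
      _ ≤ Φ y := liminf_le_of_frequently_le' (Frequently.of_forall fun j => (h j).2.2 y)
  obtain ⟨z, hz⟩ := hΦ.2
  refine ⟨fun htop => hz (top_le_iff.1 ?_), hΦ.1 x₀, key⟩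
  simpa [htop] using key z

lemma ERealConvex.inSubdiff_neg_of_forall_le_add (hΦ : ERealConvex Φ) (hproper : ERealProper Φ)
    {ψ : (Fin p → ℝ) → ℝ} {x g : Fin p → ℝ} (hmin : ∀ y, Φ x + ψ x ≤ Φ y + ψ y)
    (hψ : ∀ v, HasLineDerivAt ℝ ψ (dotR g v) x v) : InSubdiff Φ x (-g) := by
  have hx : Φ x ≠ ⊤ := by
    obtain ⟨z, hz⟩ := hproper.2
    intro htop
    have := hmin z
    rw [htop, EReal.top_add_coe, top_le_iff] at this
    exact EReal.add_ne_top hz (EReal.coe_ne_top _) this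
  refine ⟨hx, hproper.1 x, fun y => ?_⟩
  rcases eq_or_ne (Φ y) ⊤ with hy | hy
  · simp [hy]
  obtain ⟨a, ha⟩ : ∃ a : ℝ, Φ x = a := ⟨_, (EReal.coe_toReal hx (hproper.1 x)).symm⟩
  obtain ⟨b, hb⟩ : ∃ b : ℝ, Φ y = b := ⟨_, (EReal.coe_toReal hy (hproper.1 y)).symm⟩
  have hslope : ∀ t ∈ Set.Ioc (0 : ℝ) 1, a - b ≤ t⁻¹ • (ψ (x + t • (y - x)) - ψ x) := by
    rintro t ⟨ht₀, ht₁⟩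
    have hconv := hΦ x y (1 - t) t (by linarith) ht₀.le (by ring)
    rw [show (1 - t) • x + t • y = x + t • (y - x) by module, ha, hb] at hconv
    have hle := (hmin _).trans (add_le_add hconv le_rfl)
    rw [ha] at hle
    have hle' : a + ψ x ≤ (1 - t) * a + t * b + ψ (x + t • (y - x)) := by exact_mod_cast hle
    rw [smul_eq_mul, le_inv_mul_iff₀ ht₀]
    linarith
  have hab : a - b ≤ dotR g (y - x) :=
    ge_of_tendsto (hψ (y - x)).tendsto_slope_zero_right
      (eventually_of_mem (Ioc_mem_nhdsGT zero_lt_one) hslope)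
  rw [ha, hb, ← EReal.coe_add, EReal.coe_le_coe_iff, dotR_neg_left]
  linarith

end Subdifferential

section AugmentedLagrangian

variable {n m : ℕ} (Λ : Matrix (Fin m) (Fin n) ℝ) (r : ℝ)

noncomputable def augPenalty (s b : Fin m → ℝ) (x : Fin n → ℝ) : ℝ :=
  dotR s (Λ *ᵥ x) + r / 2 * dotR (Λ *ᵥ x - b) (Λ *ᵥ x - b)

lemma augPenalty_add_smul (s b : Fin m → ℝ) (x v : Fin n → ℝ) (t : ℝ) :
    augPenalty Λ r s b (x + t • v) = augPenalty Λ r s b x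
      + t * dotR (s + r • (Λ *ᵥ x - b)) (Λ *ᵥ v)
      + t ^ 2 * (r / 2 * dotR (Λ *ᵥ v) (Λ *ᵥ v)) := by
  simp only [augPenalty, dotR, mulVec_add, mulVec_smul, Pi.add_apply, Pi.sub_apply,
    Pi.smul_apply, smul_eq_mul, Finset.mul_sum, ← Finset.sum_add_distrib]
  exact Finset.sum_congr rfl fun i _ => by ring

lemma hasLineDerivAt_augPenalty (s b : Fin m → ℝ) (x v : Fin n → ℝ) :
    HasLineDerivAt ℝ (augPenalty Λ r s b) (dotR (Λᵀ *ᵥ (s + r • (Λ *ᵥ x - b))) v) x v := by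
  have hpoly := (((hasDerivAt_id (0 : ℝ)).mul_const (dotR (s + r • (Λ *ᵥ x - b)) (Λ *ᵥ v))).add
    ((hasDerivAt_pow 2 (0 : ℝ)).mul_const (r / 2 * dotR (Λ *ᵥ v) (Λ *ᵥ v)))).const_add
    (augPenalty Λ r s b x)
  unfold HasLineDerivAt
  simp_rw [augPenalty_add_smul]
  convert hpoly using 1
  · ext t; simp only [id, add_assoc, Pi.add_apply]
  · simp [dotR_transpose_mulVec]

lemma augPenalty_one_neg (s b y : Fin m → ℝ) :
    augPenalty 1 r (-s) b y = -dotR s y + r / 2 * dotR (b - y) (b - y) := by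
  rw [augPenalty, one_mulVec, dotR_neg_left, dotR_self_sub_comm]

end AugmentedLagrangian

lemma Filter.Tendsto.of_sub {ι E : Type*} [AddCommGroup E] [TopologicalSpace E]
    [IsTopologicalAddGroup E] {l : Filter ι} {x y : ι → E} {a : E} (hx : Tendsto x l (𝓝 a))
    (h : Tendsto (fun i => y i - x i) l (𝓝 0)) : Tendsto y l (𝓝 a) := by
  simpa using h.add hx

lemma Antitone.tendsto_of_tendsto_comp {ι ι' α : Type*} [Preorder ι]
    [ConditionallyCompleteLinearOrder α] [TopologicalSpace α] [OrderTopology α]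
    {L : ι → α} (hL : Antitone L) {l : Filter ι'} [l.NeBot] {φ : ι' → ι}
    (hφ : Tendsto φ l atTop) {a : α} (h : Tendsto (L ∘ φ) l (𝓝 a)) : Tendsto L atTop (𝓝 a) := by
  have hbdd : BddBelow (Set.range L) := ⟨a, by
    rintro _ ⟨k, rfl⟩
    exact _root_.le_of_tendsto h ((hφ.eventually_ge_atTop k).mono fun _ hj => hL hj)⟩
  have hlim := tendsto_atTop_ciInf hL hbdd
  rwa [tendsto_nhds_unique (hlim.comp hφ) h] at hlim

lemma Topology.IsClosedEmbedding.exists_tendsto_of_tendsto {ι X Y : Type*} [TopologicalSpace X]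
    [TopologicalSpace Y] {f : X → Y} (hf : IsClosedEmbedding f) {l : Filter ι} [l.NeBot]
    {x : ι → X} {p : Y} (h : Tendsto (f ∘ x) l (𝓝 p)) : ∃ v, f v = p ∧ Tendsto x l (𝓝 v) := by
  obtain ⟨v, rfl⟩ := hf.isClosed_range.mem_of_tendsto h (Eventually.of_forall fun i => ⟨x i, rfl⟩)
  exact ⟨v, rfl, hf.isEmbedding.tendsto_nhds_iff.2 h⟩

lemma Matrix.isClosedEmbedding_mulVec {n m : ℕ} {Λ : Matrix (Fin m) (Fin n) ℝ}
    (hΛ : Function.Injective Λ.mulVec) : IsClosedEmbedding Λ.mulVec :=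
  LinearMap.isClosedEmbedding_of_injective (f := Λ.mulVecLin) (LinearMap.ker_eq_bot.2 hΛ)

lemma dotR_descent_of_monotone {m : ℕ} {r : ℝ} (hr : 0 ≤ r) {s₀ s₁ a b₀ b₁ : Fin m → ℝ}
    (hs : s₁ = s₀ + r • (a - b₁)) (hA : dotR (s₀ + r • (a - b₀)) a ≤ 0) (hB : 0 ≤ dotR s₁ b₁) :
    dotR s₁ s₁ + r ^ 2 * dotR b₁ b₁ + r ^ 2 * dotR (a - b₀) (a - b₀)
      ≤ dotR s₀ s₀ + r ^ 2 * dotR b₀ b₀ := by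
  subst hs
  have hexp : dotR (s₀ + r • (a - b₁)) (s₀ + r • (a - b₁)) + r ^ 2 * dotR b₁ b₁
      + r ^ 2 * dotR (a - b₀) (a - b₀) - (dotR s₀ s₀ + r ^ 2 * dotR b₀ b₀)
      = 2 * r * (dotR (s₀ + r • (a - b₀)) a - dotR (s₀ + r • (a - b₁)) b₁) := by
    simp only [dotR, Pi.add_apply, Pi.sub_apply, Pi.smul_apply, smul_eq_mul, Finset.mul_sum,
      ← Finset.sum_add_distrib, ← Finset.sum_sub_distrib]
    exact Finset.sum_congr rfl fun i _ => by ring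
  nlinarith [mul_nonneg hr (neg_nonneg.mpr hA), mul_nonneg hr hB]

section ALG2

variable {n m : ℕ} {F : (Fin n → ℝ) → EReal} {Gs : (Fin m → ℝ) → EReal}
  {Λ : Matrix (Fin m) (Fin n) ℝ} {r : ℝ} {u : ℕ → Fin n → ℝ} {q σ : ℕ → Fin m → ℝ}
  {v : Fin n → ℝ} {τ : Fin m → ℝ}

def IsExtremalPair (F : (Fin n → ℝ) → EReal) (Gs : (Fin m → ℝ) → EReal)
    (Λ : Matrix (Fin m) (Fin n) ℝ) (v : Fin n → ℝ) (τ : Fin m → ℝ) : Prop :=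
  InSubdiff F v (-(Λᵀ *ᵥ τ)) ∧ InSubdiff Gs (Λ *ᵥ v) τ

/-- The first-order optimality conditions of the two minimisation steps of ALG2, together with
the multiplier update. -/
structure IsALG2Iteration (F : (Fin n → ℝ) → EReal) (Gs : (Fin m → ℝ) → EReal)
    (Λ : Matrix (Fin m) (Fin n) ℝ) (r : ℝ) (u : ℕ → Fin n → ℝ) (q σ : ℕ → Fin m → ℝ) : Prop where
  sigma_succ : ∀ k, σ (k + 1) = σ k + r • (Λ *ᵥ u (k + 1) - q (k + 1))
  inSubdiff_F : ∀ k, InSubdiff F (u (k + 1)) (-(Λᵀ *ᵥ (σ k + r • (Λ *ᵥ u (k + 1) - q k))))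
  inSubdiff_G : ∀ k, InSubdiff Gs (q (k + 1)) (σ (k + 1))

lemma isALG2Iteration_of_forall_le (hFconv : ERealConvex F) (hGconv : ERealConvex Gs)
    (hFproper : ERealProper F) (hGproper : ERealProper Gs)
    (hu : ∀ k u', F (u (k + 1)) + augPenalty Λ r (σ k) (q k) (u (k + 1))
      ≤ F u' + augPenalty Λ r (σ k) (q k) u')
    (hq : ∀ k q', Gs (q (k + 1)) + augPenalty 1 r (-σ k) (Λ *ᵥ u (k + 1)) (q (k + 1))
      ≤ Gs q' + augPenalty 1 r (-σ k) (Λ *ᵥ u (k + 1)) q')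
    (hσ : ∀ k, σ (k + 1) = σ k + r • (Λ *ᵥ u (k + 1) - q (k + 1))) :
    IsALG2Iteration F Gs Λ r u q σ where
  sigma_succ := hσ
  inSubdiff_F k :=
    hFconv.inSubdiff_neg_of_forall_le_add hFproper (hu k) (hasLineDerivAt_augPenalty Λ r _ _ _)
  inSubdiff_G k := by
    have h := hGconv.inSubdiff_neg_of_forall_le_add hGproper (hq k)
      (hasLineDerivAt_augPenalty 1 r _ _ _)
    rw [hσ k]
    rwa [transpose_one, one_mulVec, one_mulVec,
      show -(-σ k + r • (q (k + 1) - Λ *ᵥ u (k + 1))) = σ k + r • (Λ *ᵥ u (k + 1) - q (k + 1))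
        by module] at h

noncomputable def alg2Energy (r : ℝ) (p τ q σ : Fin m → ℝ) : ℝ :=
  dotR (σ - τ) (σ - τ) + r ^ 2 * dotR (q - p) (q - p)

lemma alg2Energy_nonneg (r : ℝ) (p τ q σ : Fin m → ℝ) : 0 ≤ alg2Energy r p τ q σ :=
  add_nonneg (dotR_self_nonneg _) (mul_nonneg (sq_nonneg r) (dotR_self_nonneg _))

lemma dotR_le_alg2Energy (r : ℝ) (p τ q σ : Fin m → ℝ) :
    dotR (σ - τ) (σ - τ) ≤ alg2Energy r p τ q σ :=
  le_add_of_nonneg_right (mul_nonneg (sq_nonneg r) (dotR_self_nonneg _))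

lemma sq_mul_dotR_le_alg2Energy (r : ℝ) (p τ q σ : Fin m → ℝ) :
    r ^ 2 * dotR (q - p) (q - p) ≤ alg2Energy r p τ q σ :=
  le_add_of_nonneg_left (dotR_self_nonneg _)

namespace IsALG2Iteration

lemma energy_succ_add_le (h : IsALG2Iteration F Gs Λ r u q σ) (hr : 0 ≤ r)
    (hvτ : IsExtremalPair F Gs Λ v τ) (k : ℕ) :
    alg2Energy r (Λ *ᵥ v) τ (q (k + 1)) (σ (k + 1))
      + r ^ 2 * dotR (Λ *ᵥ u (k + 1) - q k) (Λ *ᵥ u (k + 1) - q k)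
      ≤ alg2Energy r (Λ *ᵥ v) τ (q k) (σ k) := by
  have hA : dotR (σ k - τ + r • ((Λ *ᵥ u (k + 1) - Λ *ᵥ v) - (q k - Λ *ᵥ v)))
      (Λ *ᵥ u (k + 1) - Λ *ᵥ v) ≤ 0 := by
    have hmono := (h.inSubdiff_F k).dotR_sub_nonneg hvτ.1
    rw [← neg_sub', ← mulVec_sub, ← mulVec_neg, dotR_transpose_mulVec, mulVec_sub] at hmono
    rw [← neg_neg (_ + _), dotR_neg_left, neg_nonpos]
    convert hmono using 2
    module
  have := dotR_descent_of_monotone hr (by rw [h.sigma_succ]; module) hA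
    ((h.inSubdiff_G k).dotR_sub_nonneg hvτ.2)
  rwa [sub_sub_sub_cancel_right] at this

lemma antitone_energy (h : IsALG2Iteration F Gs Λ r u q σ) (hr : 0 ≤ r)
    (hvτ : IsExtremalPair F Gs Λ v τ) :
    Antitone fun k => alg2Energy r (Λ *ᵥ v) τ (q k) (σ k) :=
  antitone_nat_of_succ_le fun k => by
    linarith [h.energy_succ_add_le hr hvτ k, mul_nonneg (sq_nonneg r)
      (dotR_self_nonneg (Λ *ᵥ u (k + 1) - q k))]

lemma tendsto_mulVec_succ_sub (h : IsALG2Iteration F Gs Λ r u q σ) (hr : 0 < r)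
    (hvτ : IsExtremalPair F Gs Λ v τ) :
    Tendsto (fun k => Λ *ᵥ u (k + 1) - q k) atTop (𝓝 0) := by
  set E := fun k => alg2Energy r (Λ *ᵥ v) τ (q k) (σ k)
  have hE := tendsto_atTop_ciInf (h.antitone_energy hr.le hvτ)
    ⟨0, by rintro _ ⟨k, rfl⟩; exact alg2Energy_nonneg _ _ _ _ _⟩
  have hdecr : Tendsto (fun k => (E k - E (k + 1)) / r ^ 2) atTop (𝓝 0) := by
    simpa using (hE.sub (hE.comp (tendsto_add_atTop_nat 1))).div_const (r ^ 2)
  refine tendsto_zero_of_dotR_self (squeeze_zero (fun _ => dotR_self_nonneg _) (fun k => ?_) hdecr)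
  rw [le_div_iff₀ (by positivity), mul_comm]
  linarith [h.energy_succ_add_le hr.le hvτ k]

lemma dotR_residual_nonneg (h : IsALG2Iteration F Gs Λ r u q σ) (hr : 0 < r) (k : ℕ) :
    0 ≤ dotR (Λ *ᵥ u (k + 2) - q (k + 2)) (q (k + 2) - q (k + 1)) := by
  have hmono := (h.inSubdiff_G (k + 1)).dotR_sub_nonneg (h.inSubdiff_G k)
  rw [h.sigma_succ (k + 1), add_sub_cancel_left, dotR_eq_dotProduct, smul_dotProduct,
    smul_eq_mul] at hmono
  exact nonneg_of_mul_nonneg_right hmono hr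

lemma tendsto_residual (h : IsALG2Iteration F Gs Λ r u q σ) (hr : 0 < r)
    (hvτ : IsExtremalPair F Gs Λ v τ) :
    Tendsto (fun k => Λ *ᵥ u k - q k) atTop (𝓝 0) ∧
      Tendsto (fun k => q (k + 1) - q k) atTop (𝓝 0) := by
  have hlim : Tendsto (fun k => dotR (Λ *ᵥ u (k + 2) - q (k + 1)) (Λ *ᵥ u (k + 2) - q (k + 1)))
      atTop (𝓝 0) := by
    have := (h.tendsto_mulVec_succ_sub hr hvτ).comp (tendsto_add_atTop_nat 1)
    simpa [dotR_eq_dotProduct, add_assoc] using this.dotR this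
  have hsplit := fun k => dotR_self_add_le_of_nonneg (h.dotR_residual_nonneg hr k)
  simp only [sub_add_sub_cancel] at hsplit
  constructor
  · rw [← tendsto_add_atTop_iff_nat 2]
    refine tendsto_zero_of_dotR_self (squeeze_zero (fun _ => dotR_self_nonneg _)
      (fun k => ?_) hlim)
    linarith [hsplit k, dotR_self_nonneg (q (k + 2) - q (k + 1))]
  · rw [← tendsto_add_atTop_iff_nat 1]
    refine tendsto_zero_of_dotR_self (squeeze_zero (fun _ => dotR_self_nonneg _)
      (fun k => ?_) hlim)
    linarith [hsplit k, dotR_self_nonneg (Λ *ᵥ u (k + 2) - q (k + 2))]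

lemma tendsto_sigma_succ_sub (h : IsALG2Iteration F Gs Λ r u q σ) (hr : 0 < r)
    (hvτ : IsExtremalPair F Gs Λ v τ) :
    Tendsto (fun k => σ (k + 1) - σ k) atTop (𝓝 0) := by
  simp_rw [h.sigma_succ, add_sub_cancel_left]
  simpa using ((h.tendsto_residual hr hvτ).1.comp (tendsto_add_atTop_nat 1)).const_smul r

lemma isBounded_range (h : IsALG2Iteration F Gs Λ r u q σ) (hr : 0 < r)
    (hvτ : IsExtremalPair F Gs Λ v τ) : Bornology.IsBounded (Set.range fun k => (q k, σ k)) := by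
  set E₀ := alg2Energy r (Λ *ᵥ v) τ (q 0) (σ 0)
  refine (Metric.isBounded_iff_subset_closedBall (Λ *ᵥ v, τ)).2 ⟨√(E₀ / r ^ 2) + √E₀, ?_⟩
  rintro _ ⟨k, rfl⟩
  have hE := h.antitone_energy hr.le hvτ (Nat.zero_le k)
  rw [Metric.mem_closedBall, Prod.dist_eq, dist_eq_norm, dist_eq_norm]
  refine max_le ((norm_le_sqrt_dotR_self _).trans ?_) ((norm_le_sqrt_dotR_self _).trans ?_)
  · refine le_add_of_le_of_nonneg (Real.sqrt_le_sqrt ?_) (Real.sqrt_nonneg _)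
    rw [le_div_iff₀ (by positivity), mul_comm]
    exact (sq_mul_dotR_le_alg2Energy _ _ _ _ _).trans hE
  · exact le_add_of_nonneg_of_le (Real.sqrt_nonneg _)
      (Real.sqrt_le_sqrt ((dotR_le_alg2Energy _ _ _ _ _).trans hE))

lemma exists_extremalPair_subseq (h : IsALG2Iteration F Gs Λ r u q σ) (hr : 0 < r)
    (hΛ : Function.Injective Λ.mulVec) (hFlsc : LowerSemicontinuous F)
    (hGlsc : LowerSemicontinuous Gs) (hFproper : ERealProper F) (hGproper : ERealProper Gs)
    (hvτ : IsExtremalPair F Gs Λ v τ) :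
    ∃ v' τ', IsExtremalPair F Gs Λ v' τ' ∧ ∃ φ : ℕ → ℕ, StrictMono φ ∧
      Tendsto (q ∘ φ) atTop (𝓝 (Λ *ᵥ v')) ∧ Tendsto (σ ∘ φ) atTop (𝓝 τ') := by
  obtain ⟨⟨p', τ'⟩, -, φ, hφ, hlim⟩ :=
    tendsto_subseq_of_bounded (h.isBounded_range hr hvτ) (fun k => Set.mem_range_self k)
  have hφ' := hφ.tendsto_atTop
  have hqφ : Tendsto (q ∘ φ) atTop (𝓝 p') := (continuous_fst.tendsto _).comp hlim
  have hσφ : Tendsto (σ ∘ φ) atTop (𝓝 τ') := (continuous_snd.tendsto _).comp hlim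
  have hres := (h.tendsto_mulVec_succ_sub hr hvτ).comp hφ'
  obtain ⟨v', rfl, huφ⟩ := (isClosedEmbedding_mulVec hΛ).exists_tendsto_of_tendsto
    (x := fun j => u (φ j + 1)) (hqφ.of_sub hres)
  refine ⟨v', τ', ⟨?_, ?_⟩, φ, hφ, hqφ, hσφ⟩
  · refine inSubdiff_of_tendsto hFlsc hFproper huφ ?_ fun j => h.inSubdiff_F (φ j)
    have hw := hσφ.add (hres.const_smul r)
    simp only [smul_zero, add_zero] at hw
    exact (((continuous_const.matrix_mulVec continuous_id).tendsto _).comp hw).neg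
  · exact inSubdiff_of_tendsto hGlsc hGproper (hqφ.of_sub ((h.tendsto_residual hr hvτ).2.comp hφ'))
      (hσφ.of_sub ((h.tendsto_sigma_succ_sub hr hvτ).comp hφ')) fun j => h.inSubdiff_G (φ j)

lemma tendsto_of_tendsto_subseq (h : IsALG2Iteration F Gs Λ r u q σ) (hr : 0 < r)
    (hΛ : Function.Injective Λ.mulVec) (hvτ : IsExtremalPair F Gs Λ v τ) {φ : ℕ → ℕ}
    (hφ : StrictMono φ) (hqφ : Tendsto (q ∘ φ) atTop (𝓝 (Λ *ᵥ v)))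
    (hσφ : Tendsto (σ ∘ φ) atTop (𝓝 τ)) :
    Tendsto u atTop (𝓝 v) ∧ Tendsto q atTop (𝓝 (Λ *ᵥ v)) ∧ Tendsto σ atTop (𝓝 τ) := by
  set E := fun k => alg2Energy r (Λ *ᵥ v) τ (q k) (σ k)
  have hEφ : Tendsto (E ∘ φ) atTop (𝓝 0) := by
    have hσ' := tendsto_sub_nhds_zero_iff.2 hσφ
    have hq' := tendsto_sub_nhds_zero_iff.2 hqφ
    simpa [E, alg2Energy, dotR, Function.comp_def] using
      (hσ'.dotR hσ').add ((hq'.dotR hq').const_mul (r ^ 2))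
  have hE := (h.antitone_energy hr.le hvτ).tendsto_of_tendsto_comp hφ.tendsto_atTop hEφ
  have hσ : Tendsto σ atTop (𝓝 τ) := tendsto_sub_nhds_zero_iff.1 <| tendsto_zero_of_dotR_self <|
    squeeze_zero (fun _ => dotR_self_nonneg _) (fun k => dotR_le_alg2Energy _ _ _ _ _) hE
  have hq : Tendsto q atTop (𝓝 (Λ *ᵥ v)) := by
    refine tendsto_sub_nhds_zero_iff.1 <| tendsto_zero_of_dotR_self <|
      squeeze_zero (fun _ => dotR_self_nonneg _) (fun k => ?_) (by simpa using hE.div_const (r ^ 2))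
    rw [le_div_iff₀ (by positivity), mul_comm]
    exact sq_mul_dotR_le_alg2Energy _ _ _ _ _
  have hΛu := hq.of_sub (h.tendsto_residual hr hvτ).1
  exact ⟨(isClosedEmbedding_mulVec hΛ).isEmbedding.tendsto_nhds_iff.2 hΛu, hq, hσ⟩

end IsALG2Iteration

end ALG2

/-- convergence of the augmented Lagrangian algorithm ALG2. -/
theorem stmt_6 {n m : ℕ}
    (F : (Fin n → ℝ) → EReal) (Gs : (Fin m → ℝ) → EReal)
    (hFconv : ERealConvex F) (hGconv : ERealConvex Gs)
    (hFlsc : LowerSemicontinuous F) (hGlsc : LowerSemicontinuous Gs)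
    (hFproper : ERealProper F) (hGproper : ERealProper Gs)
    (Λ : Matrix (Fin m) (Fin n) ℝ) (hΛ : Function.Injective Λ.mulVec)
    (r : ℝ) (hr : 0 < r)
    (hexist : ∃ us : (Fin n → ℝ) × (Fin m → ℝ),
      InSubdiff F us.1 (-(Λ.transpose.mulVec us.2)) ∧
      InSubdiff Gs (Λ.mulVec us.1) us.2)
    (u : ℕ → Fin n → ℝ) (q σ : ℕ → Fin m → ℝ)
    (hu : ∀ k : ℕ, ∀ u' : Fin n → ℝ,
      F (u (k + 1)) + ((dotR (σ k) (Λ.mulVec (u (k + 1))) +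
          r / 2 * dotR (Λ.mulVec (u (k + 1)) - q k) (Λ.mulVec (u (k + 1)) - q k) : ℝ) : EReal) ≤
        F u' + ((dotR (σ k) (Λ.mulVec u') +
          r / 2 * dotR (Λ.mulVec u' - q k) (Λ.mulVec u' - q k) : ℝ) : EReal))
    (hq : ∀ k : ℕ, ∀ q' : Fin m → ℝ,
      Gs (q (k + 1)) + ((-(dotR (σ k) (q (k + 1))) +
          r / 2 * dotR (Λ.mulVec (u (k + 1)) - q (k + 1)) (Λ.mulVec (u (k + 1)) - q (k + 1)) : ℝ) : EReal) ≤
        Gs q' + ((-(dotR (σ k) q') +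
          r / 2 * dotR (Λ.mulVec (u (k + 1)) - q') (Λ.mulVec (u (k + 1)) - q') : ℝ) : EReal))
    (hσ : ∀ k : ℕ, σ (k + 1) = σ k + r • (Λ.mulVec (u (k + 1)) - q (k + 1))) :
    ∃ ubar : Fin n → ℝ, ∃ σbar : Fin m → ℝ,
      InSubdiff F ubar (-(Λ.transpose.mulVec σbar)) ∧
      InSubdiff Gs (Λ.mulVec ubar) σbar ∧
      Tendsto u atTop (nhds ubar) ∧
      Tendsto q atTop (nhds (Λ.mulVec ubar)) ∧
      Tendsto σ atTop (nhds σbar) := by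
  obtain ⟨⟨v, τ⟩, hvτ⟩ := hexist
  have h : IsALG2Iteration F Gs Λ r u q σ :=
    isALG2Iteration_of_forall_le hFconv hGconv hFproper hGproper hu
      (fun k q' => by simpa only [augPenalty_one_neg] using hq k q') hσ
  obtain ⟨ubar, σbar, hext, φ, hφ, hqφ, hσφ⟩ :=
    h.exists_extremalPair_subseq hr hΛ hFlsc hGlsc hFproper hGproper hvτ
  exact ⟨ubar, σbar, hext.1, hext.2, h.tendsto_of_tendsto_subseq hr hΛ hext hφ hqφ hσφ⟩
end

section
/- Let d ≥ 1, N ≥ 1, let v₁, …, v_N ∈ ℝ^d be unit vectors, let q > 1 with conjugate exponent p = q/(q−1), let a_k > 0, c_k > 0, δ_k > 0 for k = 1, …, N, and set b_k = (a_k c_k)^{−1/(q−1)}. Define 𝒢 : ℝ^d → ℝ ∪ {+∞} by 𝒢(σ) = inf { Σ_{k=1}^N c_k ( (a_k/q) ϱ_k^q + δ_k ϱ_k ) : ϱ ∈ ℝ₊^N, Σ_{k=1}^N ϱ_k v_k = σ } (with 𝒢(σ) = +∞ if no such ϱ exists). Then the Legendre transform of 𝒢 is given explicitly by 𝒢*(z)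 := sup_{σ ∈ ℝ^d} ( z·σ − 𝒢(σ) ) = Σ_{k=1}^N (b_k/p) ( z·v_k − δ_k c_k )₊^p for every z ∈ ℝ^d. -/
/-!
The cost is separable along the decomposition `σ = Σ ϱ_k v_k`, and `⟪z, Σ ϱ_k v_k⟫ = Σ ϱ_k ⟪z, v_k⟫`,
so taking the supremum over `σ` and then the infimum over decompositions amounts to maximizing
`Σ_k ((⟪z, v_k⟫ - δ_k c_k) ϱ_k - (a_k c_k / q) ϱ_k^q)` over `ϱ ≥ 0`, one coordinate at a time.
Each coordinate is the Legendre transform of `t ↦ A t^q / q` on `t ≥ 0` at a slope `r`: by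
Young's inequality it is `A^(1 - p) r₊^p / p`, attained at `t = (r₊ / A)^(p - 1)`, and
`1 - p = -1/(q - 1)` turns `A^(1 - p)` with `A = a_k c_k` into `b_k`.
-/

open Set

lemma isGreatest_mul_sub_rpow_div {p q : ℝ} (hpq : p.HolderConjugate q) (u : ℝ) :
    IsGreatest ((fun t => u * t - t ^ q / q) '' Ici 0) (max u 0 ^ p / p) := by
  rcases le_total u 0 with hu | hu
  · rw [max_eq_right hu, Real.zero_rpow hpq.ne_zero, zero_div]
    refine ⟨⟨0, mem_Ici.2 le_rfl, by simp [Real.zero_rpow hpq.symm.ne_zero]⟩, ?_⟩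
    rintro _ ⟨t, ht, rfl⟩
    have : 0 ≤ t ^ q / q := div_nonneg (Real.rpow_nonneg ht q) hpq.symm.nonneg
    nlinarith [mul_nonpos_of_nonpos_of_nonneg hu (show (0 : ℝ) ≤ t from ht)]
  · rw [max_eq_left hu]
    refine ⟨⟨u ^ (p - 1), Real.rpow_nonneg hu _, ?_⟩, ?_⟩
    · have hlin : u * u ^ (p - 1) = u ^ p := by
        rw [← Real.rpow_one_add' hu (by linarith [hpq.pos]), add_sub_cancel]
      have hpow : (u ^ (p - 1)) ^ q = u ^ p := by
        rw [← Real.rpow_mul hu, hpq.sub_one_mul_conj]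
      have hinv : 1 - q⁻¹ = p⁻¹ := hpq.symm.one_sub_inv
      simp only [hlin, hpow, div_eq_mul_inv, ← hinv]
      ring
    · rintro _ ⟨t, ht, rfl⟩
      linarith [Real.young_inequality_of_nonneg hu (show (0 : ℝ) ≤ t from ht) hpq]

lemma isGreatest_mul_sub_mul_rpow {p q A : ℝ} (hpq : p.HolderConjugate q) (hA : 0 < A)
    (r : ℝ) :
    IsGreatest ((fun t => r * t - A / q * t ^ q) '' Ici 0) (A ^ (1 - p) / p * max r 0 ^ p) := by
  have hscaled := (monotone_mul_left_of_nonneg hA.le).map_isGreatest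
    (isGreatest_mul_sub_rpow_div hpq (r / A))
  have hfun : (fun t => A * (r / A * t - t ^ q / q)) = fun t => r * t - A / q * t ^ q := by
    funext t
    field_simp
  have hval : A * (max (r / A) 0 ^ p / p) = A ^ (1 - p) / p * max r 0 ^ p := by
    rw [show max (r / A) 0 = max r 0 / A by rw [← max_div_div_right hA.le, zero_div],
      Real.div_rpow (le_max_right r 0) hA.le, Real.rpow_sub hA, Real.rpow_one]
    ring
  rwa [image_image, hfun, hval] at hscaled

lemma isGreatest_sum_image_pi {ι α β : Type*} [Fintype ι] [AddCommMonoid β] [PartialOrder β]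
    [IsOrderedAddMonoid β] {g : ι → α → β} {S : ι → Set α} {M : ι → β}
    (h : ∀ i, IsGreatest (g i '' S i) (M i)) :
    IsGreatest ((fun x : ι → α => ∑ i, g i (x i)) '' {x | ∀ i, x i ∈ S i}) (∑ i, M i) := by
  choose x hxS hxM using fun i => (h i).1
  refine ⟨⟨x, hxS, Finset.sum_congr rfl fun i _ => hxM i⟩, ?_⟩
  rintro _ ⟨y, hy, rfl⟩
  exact Finset.sum_le_sum fun i _ => (h i).2 ⟨y i, hy i, rfl⟩

lemma sSup_sub_sInf_eq_of_isGreatest {ι E : Type*} (φ : E → ℝ) (L : ι → E) (f : ι → ℝ)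
    (S : Set ι) (G : E → EReal)
    (hG : ∀ σ, G σ = sInf {w : EReal | ∃ ϱ, ϱ ∈ S ∧ L ϱ = σ ∧ w = (f ϱ : EReal)})
    {R : ℝ} (hR : IsGreatest ((fun ϱ => φ (L ϱ) - f ϱ) '' S) R) :
    sSup {w : EReal | ∃ σ, w = (φ σ : EReal) - G σ} = R := by
  apply le_antisymm
  · refine sSup_le ?_
    rintro _ ⟨σ, rfl⟩
    have hlower : ((φ σ - R : ℝ) : EReal) ≤ G σ := by
      rw [hG σ]
      refine le_sInf ?_
      rintro _ ⟨ϱ, hϱ, rfl, rfl⟩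
      rw [EReal.coe_le_coe_iff]
      linarith [hR.2 ⟨ϱ, hϱ, rfl⟩]
    calc (φ σ : EReal) - G σ ≤ (φ σ : EReal) - ((φ σ - R : ℝ) : EReal) :=
          EReal.sub_le_sub le_rfl hlower
      _ = R := by rw [← EReal.coe_sub, sub_sub_cancel]
  · obtain ⟨ϱ, hϱ, rfl⟩ := hR.1
    refine le_sSup_of_le ⟨L ϱ, rfl⟩ ?_
    have hupper : G (L ϱ) ≤ f ϱ := by
      rw [hG]
      exact sInf_le ⟨ϱ, hϱ, rfl, rfl⟩
    calc ((φ (L ϱ) - f ϱ : ℝ) : EReal) = (φ (L ϱ) : EReal) - f ϱ := EReal.coe_sub _ _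
      _ ≤ (φ (L ϱ) : EReal) - G (L ϱ) := EReal.sub_le_sub le_rfl hupper

theorem stmt_7_general {d Nn : ℕ}
    (v : Fin Nn → EuclideanSpace ℝ (Fin d))
    (q p : ℝ) (hq : 1 < q) (hp : p = q / (q - 1))
    (a c δ b : Fin Nn → ℝ)
    (ha : ∀ k, 0 < a k) (hc : ∀ k, 0 < c k)
    (hb : ∀ k, b k = (a k * c k) ^ (-(1 / (q - 1))))
    (G : EuclideanSpace ℝ (Fin d) → EReal)
    (hG : ∀ σ : EuclideanSpace ℝ (Fin d),
      G σ = sInf {w : EReal | ∃ ϱ : Fin Nn → ℝ, (∀ k, 0 ≤ ϱ k) ∧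
        (∑ k, ϱ k • v k) = σ ∧
        w = ((∑ k, c k * (a k / q * ϱ k ^ q + δ k * ϱ k) : ℝ) : EReal)})
    (z : EuclideanSpace ℝ (Fin d)) :
    sSup {w : EReal | ∃ σ : EuclideanSpace ℝ (Fin d),
        w = (((inner ℝ z σ : ℝ)) : EReal) - G σ} =
      ((∑ k, b k / p * (max ((inner ℝ z (v k) : ℝ) - δ k * c k) 0) ^ p : ℝ) : EReal) := by
  have hpq : p.HolderConjugate q := ((Real.holderConjugate_iff_eq_conjExponent hq).2 hp).symm
  have hexp : -(1 / (q - 1)) = 1 - p := by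
    rw [hp]
    field_simp [(sub_pos.2 hq).ne']
    ring
  have hsplit : (fun ϱ : Fin Nn → ℝ => inner ℝ z (∑ k, ϱ k • v k) -
        ∑ k, c k * (a k / q * ϱ k ^ q + δ k * ϱ k)) =
      fun ϱ => ∑ k, ((inner ℝ z (v k) - δ k * c k) * ϱ k - a k * c k / q * ϱ k ^ q) := by
    funext ϱ
    simp only [inner_sum, real_inner_smul_right, ← Finset.sum_sub_distrib]
    exact Finset.sum_congr rfl fun k _ => by ring
  refine sSup_sub_sInf_eq_of_isGreatest (inner ℝ z) (fun ϱ : Fin Nn → ℝ => ∑ k, ϱ k • v k)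
    (fun ϱ => ∑ k, c k * (a k / q * ϱ k ^ q + δ k * ϱ k))
    {ϱ : Fin Nn → ℝ | ∀ k, 0 ≤ ϱ k} G hG ?_
  rw [hsplit]
  simp only [hb, hexp]
  exact isGreatest_sum_image_pi fun k =>
    isGreatest_mul_sub_mul_rpow hpq (mul_pos (ha k) (hc k)) _

/-- the Legendre transform of the anisotropic congestion cost
`𝒢(σ) = inf { Σ_k c_k ((a_k/q) ϱ_k^q + δ_k ϱ_k) : ϱ ∈ ℝ₊^N, Σ_k ϱ_k v_k = σ }`
(with value `+∞` when no decomposition exists) is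
`𝒢*(z) = Σ_k (b_k/p) (z·v_k − δ_k c_k)₊^p`, where `b_k = (a_k c_k)^{−1/(q−1)}`. -/
theorem stmt_7 {d Nn : ℕ} (hd : 1 ≤ d) (hN : 1 ≤ Nn)
    (v : Fin Nn → EuclideanSpace ℝ (Fin d)) (hv : ∀ k, ‖v k‖ = 1)
    (q p : ℝ) (hq : 1 < q) (hp : p = q / (q - 1))
    (a c δ b : Fin Nn → ℝ)
    (ha : ∀ k, 0 < a k) (hc : ∀ k, 0 < c k) (hδ : ∀ k, 0 < δ k)
    (hb : ∀ k, b k = (a k * c k) ^ (-(1 / (q - 1))))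
    (G : EuclideanSpace ℝ (Fin d) → EReal)
    (hG : ∀ σ : EuclideanSpace ℝ (Fin d),
      G σ = sInf {w : EReal | ∃ ϱ : Fin Nn → ℝ, (∀ k, 0 ≤ ϱ k) ∧
        (∑ k, ϱ k • v k) = σ ∧
        w = ((∑ k, c k * (a k / q * ϱ k ^ q + δ k * ϱ k) : ℝ) : EReal)})
    (z : EuclideanSpace ℝ (Fin d)) :
    sSup {w : EReal | ∃ σ : EuclideanSpace ℝ (Fin d),
        w = (((inner ℝ z σ : ℝ)) : EReal) - G σ} =
      ((∑ k, b k / p * (max ((inner ℝ z (v k) : ℝ) - δ k * c k) 0) ^ p : ℝ) : EReal) :=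
  stmt_7_general v q p hq hp a c δ b ha hc hb G hG z
end

section
/- Let d ≥ 1, p > 1, c ≥ 0, r > 0 and q̃ ∈ ℝ^d with q̃ ≠ 0. Then the strictly convex function q ↦ (1/p)(‖q‖ − c)₊^p + (r/2)‖q − q̃‖² on ℝ^d has a unique minimizer q*, and q* = λ q̃ where λ is the unique nonnegative real number satisfying (λ‖q̃‖ − c)₊^{p−1} + r λ‖q̃‖ − r‖q̃‖ = 0; moreover λ ∈ (0, 1]. -/
/-!
The minimizer lies on the ray through `q̃`: since `‖q - q̃‖ ≥ |‖q‖ - ‖q̃‖|`, the objective at `q`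
dominates the scalar function `ψ s = (1/p)(s - c)₊^p + (r/2)(s - ‖q̃‖)²` at `s = ‖q‖`, with equality
at `q = λ q̃`. The equation for `λ` is the first-order condition for `ψ` at `λ‖q̃‖`, which suffices
by convexity (the tangent-line inequality for `s ↦ s^p / p`). The residual is strictly increasing
in `λ`, negative at `0` and nonnegative at `1`. Strict convexity comes from the quadratic term.
-/

open Real Set

noncomputable def stepResidual (p c r t μ : ℝ) : ℝ :=
  (max (μ * t - c) 0) ^ (p - 1) + r * μ * t - r * t

theorem rpow_div_add_rpow_sub_one_mul_sub_le {p x y : ℝ} (hp : 1 < p) (hx : 0 ≤ x) (hy : 0 ≤ y) :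
    y ^ p / p + y ^ (p - 1) * (x - y) ≤ x ^ p / p := by
  have young := Real.young_inequality_of_nonneg hx (rpow_nonneg hy (p - 1))
    (Real.HolderConjugate.conjExponent hp)
  have hpow : (y ^ (p - 1)) ^ (p / (p - 1)) = y ^ p := by
    rw [← rpow_mul hy]
    congr 1
    field_simp [(by linarith : p - 1 ≠ 0)]
  have hmul : y ^ (p - 1) * y = y ^ p := by
    rw [← rpow_add_one' hy (by linarith), sub_add_cancel]
  rw [Real.conjExponent, hpow] at young
  have hconj : y ^ p / (p / (p - 1)) = y ^ p - y ^ p / p := by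
    field_simp
  linarith [mul_comm x (y ^ (p - 1))]

theorem posPart_rpow_subgradient {p c a s : ℝ} (hp : 1 < p) :
    (max (a - c) 0) ^ p / p + (max (a - c) 0) ^ (p - 1) * (s - a) ≤ (max (s - c) 0) ^ p / p := by
  rcases le_or_gt c a with hca | hac
  · have hsa : s - a ≤ max (s - c) 0 - max (a - c) 0 := by
      rw [max_eq_left (sub_nonneg.mpr hca)]; linarith [le_max_left (s - c) 0]
    have hslope : 0 ≤ (max (a - c) 0) ^ (p - 1) := rpow_nonneg (le_max_right _ _) _
    linarith [mul_le_mul_of_nonneg_left hsa hslope,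
      rpow_div_add_rpow_sub_one_mul_sub_le hp (le_max_right (s - c) 0) (le_max_right (a - c) 0)]
  · rw [max_eq_right (by linarith : a - c ≤ 0), zero_rpow (by linarith), zero_rpow (by linarith)]
    simp only [zero_div, zero_mul, add_zero]
    positivity

theorem posPart_rpow_add_sq_le_of_optimality {p c r t a : ℝ} (hp : 1 < p) (hr : 0 ≤ r)
    (ha : (max (a - c) 0) ^ (p - 1) = r * (t - a)) (s : ℝ) :
    1 / p * (max (a - c) 0) ^ p + r / 2 * (a - t) ^ 2 ≤
      1 / p * (max (s - c) 0) ^ p + r / 2 * (s - t) ^ 2 := by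
  have h := posPart_rpow_subgradient (s := s) (c := c) (a := a) hp
  rw [ha] at h
  have hsq : 0 ≤ r / 2 * (s - a) ^ 2 := by positivity
  simp only [div_eq_inv_mul] at h ⊢
  nlinarith

theorem strictMono_stepResidual {p c r t : ℝ} (hp : 1 ≤ p) (hr : 0 < r) (ht : 0 < t) :
    StrictMono (stepResidual p c r t) := by
  intro μ ν hμν
  have hpen : (max (μ * t - c) 0) ^ (p - 1) ≤ (max (ν * t - c) 0) ^ (p - 1) := by
    gcongr
  have hlin : r * μ * t < r * ν * t := by gcongr
  simp only [stepResidual]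
  linarith

theorem continuous_stepResidual {p : ℝ} (hp : 1 ≤ p) (c r t : ℝ) :
    Continuous (stepResidual p c r t) := by
  unfold stepResidual
  have : Continuous fun μ : ℝ => (max (μ * t - c) 0) ^ (p - 1) :=
    (by fun_prop : Continuous fun μ : ℝ => max (μ * t - c) 0).rpow_const
      fun _ => Or.inr (by linarith)
  fun_prop

theorem exists_stepResidual_eq_zero {p c r t : ℝ} (hp : 1 < p) (hc : 0 ≤ c) (hr : 0 < r)
    (ht : 0 < t) : ∃ lam ∈ Ioc (0 : ℝ) 1, stepResidual p c r t lam = 0 := by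
  have hneg : stepResidual p c r t 0 < 0 := by
    simp only [stepResidual, zero_mul, zero_sub, max_eq_right (neg_nonpos.mpr hc),
      zero_rpow (by linarith : p - 1 ≠ 0), mul_zero, zero_add]
    nlinarith
  have hnonneg : 0 ≤ stepResidual p c r t 1 := by
    simp only [stepResidual, mul_one, one_mul, add_sub_cancel_right]
    positivity
  obtain ⟨lam, ⟨hlam0, hlam1⟩, hroot⟩ := intermediate_value_Icc zero_le_one
    (continuous_stepResidual hp.le c r t).continuousOn ⟨hneg.le, hnonneg⟩
  exact ⟨lam, ⟨hlam0.lt_of_ne (by rintro rfl; exact hneg.ne hroot), hlam1⟩, hroot⟩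

section

variable {E : Type*} [NormedAddCommGroup E]

noncomputable def proxObjective (p c r : ℝ) (x₀ q : E) : ℝ :=
  1 / p * (max (‖q‖ - c) 0) ^ p + r / 2 * ‖q - x₀‖ ^ 2

theorem convexOn_posPart_norm_sub_rpow [NormedSpace ℝ E] {p : ℝ} (hp : 1 ≤ p) (c : ℝ) :
    ConvexOn ℝ univ fun q : E => 1 / p * (max (‖q‖ - c) 0) ^ p := by
  have hpos : ConvexOn ℝ univ fun q : E => max (‖q‖ - c) 0 :=
    ((convexOn_norm convex_univ).add_const (-c)).sup (convexOn_const 0 convex_univ)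
  refine ConvexOn.smul (by positivity) ⟨convex_univ, fun x _ y _ a b ha hb hab => ?_⟩
  calc (max (‖a • x + b • y‖ - c) 0) ^ p
      ≤ (a • max (‖x‖ - c) 0 + b • max (‖y‖ - c) 0) ^ p :=
        rpow_le_rpow (le_max_right _ _) (hpos.2 trivial trivial ha hb hab) (by linarith)
    _ ≤ a • (max (‖x‖ - c) 0) ^ p + b • (max (‖y‖ - c) 0) ^ p :=
        (convexOn_rpow hp).2 (mem_Ici.2 (le_max_right _ _)) (mem_Ici.2 (le_max_right _ _)) ha hb hab

theorem strongConvexOn_univ_mul_norm_sub_sq [InnerProductSpace ℝ E] (m : ℝ) (x₀ : E) :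
    StrongConvexOn univ m fun x : E => m / 2 * ‖x - x₀‖ ^ 2 := by
  rw [strongConvexOn_iff_convex]
  refine ((((-m) • innerₗ E x₀).convexOn convex_univ).add_const (m / 2 * ‖x₀‖ ^ 2)).congr
    fun x _ => ?_
  simp only [Pi.add_apply, LinearMap.smul_apply, innerₗ_apply_apply, smul_eq_mul,
    norm_sub_sq_real, real_inner_comm]
  ring

theorem strictConvexOn_proxObjective [InnerProductSpace ℝ E] {p : ℝ} (hp : 1 ≤ p) (c : ℝ)
    {r : ℝ} (hr : 0 < r) (x₀ : E) : StrictConvexOn ℝ univ (proxObjective p c r x₀) :=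
  (convexOn_posPart_norm_sub_rpow hp c).add_strictConvexOn
    ((strongConvexOn_univ_mul_norm_sub_sq r x₀).strictConvexOn hr)

theorem proxObjective_smul_le_of_stepResidual_eq_zero [NormedSpace ℝ E] {p c r lam : ℝ}
    (hp : 1 < p) (hr : 0 ≤ r) (x₀ : E) (hlam : 0 ≤ lam)
    (hroot : stepResidual p c r ‖x₀‖ lam = 0) (q : E) :
    proxObjective p c r x₀ (lam • x₀) ≤ proxObjective p c r x₀ q := by
  have hnorm : ‖lam • x₀‖ = lam * ‖x₀‖ := by rw [norm_smul, norm_of_nonneg hlam]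
  have hdist : ‖lam • x₀ - x₀‖ = |lam * ‖x₀‖ - ‖x₀‖| := by
    rw [← sub_one_mul, abs_mul, abs_norm, ← Real.norm_eq_abs, ← norm_smul, sub_smul, one_smul]
  have hq : (‖q‖ - ‖x₀‖) ^ 2 ≤ ‖q - x₀‖ ^ 2 :=
    sq_le_sq.mpr ((abs_norm_sub_norm_le q x₀).trans (le_abs_self _))
  have hopt : (max (lam * ‖x₀‖ - c) 0) ^ (p - 1) = r * (‖x₀‖ - lam * ‖x₀‖) := by
    unfold stepResidual at hroot; linarith
  calc proxObjective p c r x₀ (lam • x₀)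
      = 1 / p * (max (lam * ‖x₀‖ - c) 0) ^ p + r / 2 * (lam * ‖x₀‖ - ‖x₀‖) ^ 2 := by
        rw [proxObjective, hnorm, hdist, sq_abs]
    _ ≤ 1 / p * (max (‖q‖ - c) 0) ^ p + r / 2 * (‖q‖ - ‖x₀‖) ^ 2 :=
        posPart_rpow_add_sq_le_of_optimality hp hr hopt ‖q‖
    _ ≤ proxObjective p c r x₀ q := by unfold proxObjective; gcongr

end

theorem stmt_8_general {d : ℕ} (p : ℝ) (hp : 1 < p)
    (c : ℝ) (hc : 0 ≤ c) (r : ℝ) (hr : 0 < r)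
    (qt : EuclideanSpace ℝ (Fin d)) (hqt : qt ≠ 0)
    (φ : EuclideanSpace ℝ (Fin d) → ℝ)
    (hφ : ∀ q : EuclideanSpace ℝ (Fin d),
      φ q = 1 / p * (max (‖q‖ - c) 0) ^ p + r / 2 * ‖q - qt‖ ^ 2) :
    StrictConvexOn ℝ Set.univ φ ∧
    ∃ qstar : EuclideanSpace ℝ (Fin d),
      (∀ q, φ qstar ≤ φ q) ∧
      (∀ q' : EuclideanSpace ℝ (Fin d), (∀ q, φ q' ≤ φ q) → q' = qstar) ∧
      ∃ lam : ℝ, qstar = lam • qt ∧ 0 ≤ lam ∧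
        (max (lam * ‖qt‖ - c) 0) ^ (p - 1) + r * lam * ‖qt‖ - r * ‖qt‖ = 0 ∧
        (∀ μ : ℝ, 0 ≤ μ →
          (max (μ * ‖qt‖ - c) 0) ^ (p - 1) + r * μ * ‖qt‖ - r * ‖qt‖ = 0 → μ = lam) ∧
        0 < lam ∧ lam ≤ 1 := by
  obtain rfl : φ = proxObjective p c r qt := funext hφ
  have hconv := strictConvexOn_proxObjective hp.le c hr qt
  have ht : 0 < ‖qt‖ := norm_pos_iff.mpr hqt
  obtain ⟨lam, ⟨hlam0, hlam1⟩, hroot⟩ := exists_stepResidual_eq_zero hp hc hr ht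
  have hmin := proxObjective_smul_le_of_stepResidual_eq_zero hp hr.le qt hlam0.le hroot
  refine ⟨hconv, lam • qt, hmin, fun q' hq' => ?_, lam, rfl, hlam0.le, hroot,
    fun μ _ hμ => ?_, hlam0, hlam1⟩
  · exact hconv.eq_of_isMinOn (isMinOn_univ_iff.2 hq') (isMinOn_univ_iff.2 hmin) trivial trivial
  · exact (strictMono_stepResidual hp.le hr ht).injective (hμ.trans hroot.symm)

/-- the pointwise ALG2 subproblem
`q ↦ (1/p)(‖q‖ − c)₊^p + (r/2)‖q − q̃‖²` is strictly convex, has a unique minimizer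
`q* = λ q̃` where `λ` is the unique nonnegative root of
`(λ‖q̃‖ − c)₊^{p−1} + rλ‖q̃‖ − r‖q̃‖ = 0`, and moreover `λ ∈ (0, 1]`. -/
theorem stmt_8 {d : ℕ} (hd : 1 ≤ d) (p : ℝ) (hp : 1 < p)
    (c : ℝ) (hc : 0 ≤ c) (r : ℝ) (hr : 0 < r)
    (qt : EuclideanSpace ℝ (Fin d)) (hqt : qt ≠ 0)
    (φ : EuclideanSpace ℝ (Fin d) → ℝ)
    (hφ : ∀ q : EuclideanSpace ℝ (Fin d),
      φ q = 1 / p * (max (‖q‖ - c) 0) ^ p + r / 2 * ‖q - qt‖ ^ 2) :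
    StrictConvexOn ℝ Set.univ φ ∧
    ∃ qstar : EuclideanSpace ℝ (Fin d),
      (∀ q, φ qstar ≤ φ q) ∧
      (∀ q' : EuclideanSpace ℝ (Fin d), (∀ q, φ q' ≤ φ q) → q' = qstar) ∧
      ∃ lam : ℝ, qstar = lam • qt ∧ 0 ≤ lam ∧
        (max (lam * ‖qt‖ - c) 0) ^ (p - 1) + r * lam * ‖qt‖ - r * ‖qt‖ = 0 ∧
        (∀ μ : ℝ, 0 ≤ μ →
          (max (μ * ‖qt‖ - c) 0) ^ (p - 1) + r * μ * ‖qt‖ - r * ‖qt‖ = 0 → μ = lam) ∧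
        0 < lam ∧ lam ≤ 1 :=
  stmt_8_general p hp c hc r hr qt hqt φ hφ
end

section
/- Let d ≥ 1, N ≥ 1, let v₁, …, v_N ∈ ℝ^d, let q > 1 and λ > 0, and for each k = 1, …, N let G_k : ℝ₊ → ℝ be continuous, strictly convex, nondecreasing with G_k(0) = 0 and G_k(m) ≥ λ(m^q − 1) for all m ≥ 0. Define 𝒢 : ℝ^d → ℝ ∪ {+∞} by 𝒢(σ) = inf { Σ_{k=1}^N G_k(ϱ_k) : ϱ ∈ ℝ₊^N, Σ_{k=1}^N ϱ_k v_k = σ } (with 𝒢(σ) = +∞ if no such ϱ exists). Then 𝒢 is strictly convex on its effective domain D = { σ ∈ ℝ^d : ∃ ϱ ∈ ℝ₊^N with Σ_k ϱ_k v_k = σ }; that is, D is convex and for all σ, σ' ∈ D with σ ≠ σ' and all s ∈ (0,1), 𝒢(sσ + (1−s)σ') < s𝒢(σ) + (1−s)𝒢(σ'). -/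
lemma exists_minimizer {d Nn : ℕ} (v : Fin Nn → EuclideanSpace ℝ (Fin d))
    (q lam : ℝ) (hq : 1 < q) (hlam : 0 < lam)
    (G : Fin Nn → ℝ → ℝ)
    (hG_cont : ∀ k, ContinuousOn (G k) (Set.Ici 0))
    (hG_coer : ∀ k, ∀ m : ℝ, 0 ≤ m → lam * (m ^ q - 1) ≤ G k m)
    {σ : EuclideanSpace ℝ (Fin d)} (ϱ₀ : Fin Nn → ℝ)
    (h0 : ∀ k, 0 ≤ ϱ₀ k) (hs0 : ∑ k, ϱ₀ k • v k = σ) :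
    ∃ ϱ : Fin Nn → ℝ, (∀ k, 0 ≤ ϱ k) ∧ (∑ k, ϱ k • v k) = σ ∧
      ∀ ϱ' : Fin Nn → ℝ, (∀ k, 0 ≤ ϱ' k) → (∑ k, ϱ' k • v k) = σ →
        ∑ k, G k (ϱ k) ≤ ∑ k, G k (ϱ' k) := by
  classical
  set F : (Fin Nn → ℝ) → ℝ := fun ϱ => ∑ k, G k (ϱ k) with hF
  set c : ℝ := F ϱ₀ with hc
  have hq0 : (0:ℝ) < q := lt_trans one_pos hq
  -- coercivity bound : F ϱ ≥ lam * (ϱ k)^q - lam * Nn for nonneg ϱ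
  have key : ∀ ϱ : Fin Nn → ℝ, (∀ k, 0 ≤ ϱ k) → ∀ k, lam * (ϱ k) ^ q - lam * Nn ≤ F ϱ := by
    intro ϱ hϱ k
    have h1 : ∑ j, (lam * ((ϱ j) ^ q - 1)) ≤ F ϱ :=
      Finset.sum_le_sum fun j _ => hG_coer j (ϱ j) (hϱ j)
    have h2 : (ϱ k) ^ q ≤ ∑ j, (ϱ j) ^ q :=
      Finset.single_le_sum (f := fun j => (ϱ j) ^ q)
        (fun j _ => Real.rpow_nonneg (hϱ j) q) (Finset.mem_univ k)
    have h3 : ∑ j, (lam * ((ϱ j) ^ q - 1)) = lam * (∑ j, (ϱ j) ^ q) - lam * Nn := by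
      simp only [mul_sub, mul_one]
      rw [Finset.sum_sub_distrib, ← Finset.mul_sum]
      simp only [Finset.sum_const, Finset.card_univ, Fintype.card_fin, nsmul_eq_mul]
      ring
    nlinarith
  have hcN : -(lam * Nn) ≤ c := by
    have := key ϱ₀ h0
    have h1 : ∑ j, (lam * ((ϱ₀ j) ^ q - 1)) ≤ c :=
      Finset.sum_le_sum fun j _ => hG_coer j (ϱ₀ j) (h0 j)
    have h2 : ∀ j ∈ Finset.univ, (-lam : ℝ) ≤ lam * ((ϱ₀ j) ^ q - 1) := by
      intro j _
      have : (0:ℝ) ≤ (ϱ₀ j) ^ q := Real.rpow_nonneg (h0 j) q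
      nlinarith
    have h3 : ∑ _j : Fin Nn, (-lam : ℝ) ≤ ∑ j, (lam * ((ϱ₀ j) ^ q - 1)) :=
      Finset.sum_le_sum h2
    have h4 : ∑ _j : Fin Nn, (-lam : ℝ) = -(lam * Nn) := by
      simp [Finset.sum_const, mul_comm]
    linarith
  -- radius
  set R₂ : ℝ := ((c + lam * Nn + 1) / lam) ^ (1/q : ℝ) with hR₂
  have hbase : (0:ℝ) ≤ (c + lam * Nn + 1) / lam := div_nonneg (by linarith) hlam.le
  have hR₂0 : 0 ≤ R₂ := Real.rpow_nonneg hbase _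
  have hR₂q : lam * R₂ ^ q = c + lam * Nn + 1 := by
    rw [hR₂, ← Real.rpow_mul hbase, one_div, inv_mul_cancel₀ (ne_of_gt hq0), Real.rpow_one]
    field_simp
  set R₁ : ℝ := ∑ k, ϱ₀ k with hR₁
  have hR₁b : ∀ k, ϱ₀ k ≤ R₁ :=
    fun k => Finset.single_le_sum (fun j _ => h0 j) (Finset.mem_univ k)
  set R : ℝ := max R₁ R₂ with hR
  -- compact set
  set K : Set (Fin Nn → ℝ) :=
    (Set.univ.pi fun _ => Set.Icc 0 R) ∩ {ϱ | ∑ k, ϱ k • v k = σ} with hK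
  have hKc : IsCompact K := by
    apply (isCompact_univ_pi fun _ => isCompact_Icc).inter_right
    have : Continuous fun ϱ : Fin Nn → ℝ => ∑ k, ϱ k • v k :=
      continuous_finset_sum _ fun k _ => (continuous_apply k).smul continuous_const
    exact isClosed_singleton.preimage this
  have hϱ₀K : ϱ₀ ∈ K := by
    constructor
    · intro k _
      exact ⟨h0 k, (hR₁b k).trans (le_max_left _ _)⟩
    · exact hs0
  have hFcont : ContinuousOn F K := by
    apply continuousOn_finset_sum
    intro k _
    apply (hG_cont k).comp (continuous_apply k).continuousOn
    intro ϱ hϱ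
    exact (hϱ.1 k (Set.mem_univ k)).1
  obtain ⟨ϱ, hϱK, hmin⟩ := hKc.exists_isMinOn ⟨ϱ₀, hϱ₀K⟩ hFcont
  have hϱnn : ∀ k, 0 ≤ ϱ k := fun k => (hϱK.1 k (Set.mem_univ k)).1
  refine ⟨ϱ, hϱnn, hϱK.2, ?_⟩
  intro ϱ' h' hs'
  by_cases hb : ∀ k, ϱ' k ≤ R
  · exact hmin ⟨fun k _ => ⟨h' k, hb k⟩, hs'⟩
  · push_neg at hb
    obtain ⟨k, hk⟩ := hb
    have h1 : lam * (ϱ' k) ^ q - lam * Nn ≤ F ϱ' := key ϱ' h' k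
    have h2 : R₂ < ϱ' k := lt_of_le_of_lt (le_max_right _ _) hk
    have h3 : R₂ ^ q < (ϱ' k) ^ q := Real.rpow_lt_rpow hR₂0 h2 hq0
    have h4 : F ϱ ≤ c := hmin hϱ₀K
    nlinarith

/-- strict convexity, on its effective domain, of the minimal anisotropic
congestion cost `𝒢(σ) = inf { Σ_k G_k(ϱ_k) : ϱ ∈ ℝ₊^N, Σ_k ϱ_k v_k = σ }`, when each
`G_k : ℝ₊ → ℝ` is continuous, strictly convex, nondecreasing, vanishes at `0` and
satisfies the coercivity bound `G_k(m) ≥ λ(m^q − 1)`. -/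
theorem stmt_10 {d Nn : ℕ} (hd : 1 ≤ d) (hN : 1 ≤ Nn)
    (v : Fin Nn → EuclideanSpace ℝ (Fin d))
    (q lam : ℝ) (hq : 1 < q) (hlam : 0 < lam)
    (G : Fin Nn → ℝ → ℝ)
    (hG_cont : ∀ k, ContinuousOn (G k) (Set.Ici 0))
    (hG_sconv : ∀ k, StrictConvexOn ℝ (Set.Ici 0) (G k))
    (hG_mono : ∀ k, MonotoneOn (G k) (Set.Ici 0))
    (hG_zero : ∀ k, G k 0 = 0)
    (hG_coer : ∀ k, ∀ m : ℝ, 0 ≤ m → lam * (m ^ q - 1) ≤ G k m)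
    (𝒢 : EuclideanSpace ℝ (Fin d) → ℝ)
    (h𝒢 : ∀ σ : EuclideanSpace ℝ (Fin d),
      𝒢 σ = sInf {w : ℝ | ∃ ϱ : Fin Nn → ℝ, (∀ k, 0 ≤ ϱ k) ∧
        (∑ k, ϱ k • v k) = σ ∧ w = ∑ k, G k (ϱ k)})
    (D : Set (EuclideanSpace ℝ (Fin d)))
    (hD : D = {σ : EuclideanSpace ℝ (Fin d) |
      ∃ ϱ : Fin Nn → ℝ, (∀ k, 0 ≤ ϱ k) ∧ (∑ k, ϱ k • v k) = σ}) :
    Convex ℝ D ∧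
    ∀ σ ∈ D, ∀ σ' ∈ D, σ ≠ σ' → ∀ s : ℝ, s ∈ Set.Ioo (0:ℝ) 1 →
      𝒢 (s • σ + (1 - s) • σ') < s * 𝒢 σ + (1 - s) * 𝒢 σ' := by
  classical
  subst hD
  -- value of 𝒢 at a minimizer
  have hval : ∀ (σ : EuclideanSpace ℝ (Fin d)) (ϱ : Fin Nn → ℝ),
      (∀ k, 0 ≤ ϱ k) → (∑ k, ϱ k • v k) = σ →
      (∀ ϱ' : Fin Nn → ℝ, (∀ k, 0 ≤ ϱ' k) → (∑ k, ϱ' k • v k) = σ →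
        ∑ k, G k (ϱ k) ≤ ∑ k, G k (ϱ' k)) →
      𝒢 σ = ∑ k, G k (ϱ k) := by
    intro σ ϱ h1 h2 h3
    rw [h𝒢 σ]
    apply IsLeast.csInf_eq
    exact ⟨⟨ϱ, h1, h2, rfl⟩, fun w ⟨ϱ', h1', h2', hw⟩ => hw ▸ h3 ϱ' h1' h2'⟩
  have hbdd : ∀ σ : EuclideanSpace ℝ (Fin d),
      BddBelow {w : ℝ | ∃ ϱ : Fin Nn → ℝ, (∀ k, 0 ≤ ϱ k) ∧
        (∑ k, ϱ k • v k) = σ ∧ w = ∑ k, G k (ϱ k)} := by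
    intro σ
    refine ⟨-(lam * Nn), ?_⟩
    rintro w ⟨ϱ, h1, _, rfl⟩
    have h2 : ∀ j ∈ Finset.univ, (-lam : ℝ) ≤ G j (ϱ j) := by
      intro j _
      have hc := hG_coer j (ϱ j) (h1 j)
      have : (0:ℝ) ≤ (ϱ j) ^ q := Real.rpow_nonneg (h1 j) q
      nlinarith
    have h3 : ∑ _j : Fin Nn, (-lam : ℝ) ≤ ∑ j, G j (ϱ j) := Finset.sum_le_sum h2
    have h4 : ∑ _j : Fin Nn, (-lam : ℝ) = -(lam * Nn) := by
      simp [Finset.sum_const, mul_comm]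
    linarith
  constructor
  · rintro σ ⟨ϱ, h1, h2⟩ σ' ⟨ϱ', h1', h2'⟩ a b ha hb hab
    refine ⟨fun k => a * ϱ k + b * ϱ' k, fun k => add_nonneg (mul_nonneg ha (h1 k)) (mul_nonneg hb (h1' k)), ?_⟩
    simp only [add_smul, mul_smul, Finset.sum_add_distrib, ← Finset.smul_sum, h2, h2']
  · rintro σ ⟨ϱ₀, h01, h02⟩ σ' ⟨ϱ₀', h01', h02'⟩ hne s hs
    obtain ⟨ϱ, hϱ1, hϱ2, hϱmin⟩ :=
      exists_minimizer v q lam hq hlam G hG_cont hG_coer ϱ₀ h01 h02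
    obtain ⟨ϱ', hϱ1', hϱ2', hϱmin'⟩ :=
      exists_minimizer v q lam hq hlam G hG_cont hG_coer ϱ₀' h01' h02'
    have hvσ : 𝒢 σ = ∑ k, G k (ϱ k) := hval σ ϱ hϱ1 hϱ2 hϱmin
    have hvσ' : 𝒢 σ' = ∑ k, G k (ϱ' k) := hval σ' ϱ' hϱ1' hϱ2' hϱmin'
    have hϱne : ϱ ≠ ϱ' := by
      intro h; apply hne; rw [← hϱ2, ← hϱ2', h]
    obtain ⟨k₀, hk₀⟩ := Function.ne_iff.mp hϱne
    have hs0 : 0 < s := hs.1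
    have hs1 : 0 < 1 - s := by linarith [hs.2]
    -- the combination is feasible for the combined point
    have hfeas : (∑ k, (s * ϱ k + (1 - s) * ϱ' k) • v k) = s • σ + (1 - s) • σ' := by
      simp only [add_smul, mul_smul, Finset.sum_add_distrib, ← Finset.smul_sum, hϱ2, hϱ2']
    have hle : 𝒢 (s • σ + (1 - s) • σ') ≤ ∑ k, G k (s * ϱ k + (1 - s) * ϱ' k) := by
      rw [h𝒢]
      exact csInf_le (hbdd _) ⟨fun k => s * ϱ k + (1 - s) * ϱ' k,
        fun k => add_nonneg (mul_nonneg hs0.le (hϱ1 k)) (mul_nonneg hs1.le (hϱ1' k)), hfeas, rfl⟩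
    have hstrict : ∑ k, G k (s * ϱ k + (1 - s) * ϱ' k)
        < ∑ k, (s * G k (ϱ k) + (1 - s) * G k (ϱ' k)) := by
      apply Finset.sum_lt_sum
      · intro i _
        have := (hG_sconv i).convexOn.2 (hϱ1 i) (hϱ1' i) (le_of_lt hs0) (le_of_lt hs1)
          (by ring)
        simpa [smul_eq_mul] using this
      · refine ⟨k₀, Finset.mem_univ k₀, ?_⟩
        have := (hG_sconv k₀).2 (hϱ1 k₀) (hϱ1' k₀) hk₀ hs0 hs1 (by ring)
        simpa [smul_eq_mul] using this
    rw [hvσ, hvσ', Finset.mul_sum, Finset.mul_sum, ← Finset.sum_add_distrib]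
    exact lt_of_le_of_lt hle hstrict
end
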